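/- For all integers n ≥ 1 and r ≥ 0, D^{n−1}(a·x^{r}·y) = a·x^{r}·y^{n}·w^{n−1} · ∑_{k=0}^{n−1} Q_{n,k}(r + x·w^{−1} − 1) · y^{k}, as an identity in the field K, where Q_{n,k}(r + x·w^{−1} − 1) denotes the evaluation of the polynomial Q_{n,k} at the element r + x·w^{−1} − 1 ∈ K. -/

import Mathlib

open Polynomial

/-- The Ramanujan–Shor polynomials `Q n k ∈ ℚ[x]`. -/
noncomputable def ramanujanShorQ : ℕ → ℤ → Polynomial ℚ
  | 0, _ => 0
  | 1, k => if k = 0 then 1 else 0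
  | (n + 2), k =>
      if 0 ≤ k ∧ k ≤ (n : ℤ) + 1 then
        (Polynomial.X + Polynomial.C ((n : ℚ) + 1)) * ramanujanShorQ (n + 1) k
          + Polynomial.C (((n : ℤ) + k : ℤ) : ℚ) * ramanujanShorQ (n + 1) (k - 1)
      else 0

/-- The images of the four variables `a, x, y, w` in the fraction field of `ℚ[a,x,y,w]`. -/
noncomputable def gv (i : Fin 4) : FractionRing (MvPolynomial (Fin 4) ℚ) :=
  algebraMap (MvPolynomial (Fin 4) ℚ) (FractionRing (MvPolynomial (Fin 4) ℚ)) (MvPolynomial.X i)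

/-!
With `t = r + x/w - 1` one has `D t = 0`, because `D (x/w) = 0`, and the logarithmic derivative
of a monomial is `D (a x^r y^m w^j) / (a x^r y^m w^j) = x y + y w (r + m y + j)`.
Hence applying `D` to `a x^r y^n w^(n-1) · ∑ c_k y^k` with `D`-constant coefficients `c_k` gives
`a x^r y^(n+1) w^n · ∑ c'_k y^k` with `c'_k = (t + n) c_k + (n + k - 1) c_(k-1)`, which is
Shor's recurrence evaluated at `t`.
-/

open Finset

theorem ramanujanShorQ_one (k : ℤ) : ramanujanShorQ 1 k = if k = 0 then 1 else 0 := rfl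

theorem ramanujanShorQ_add_two (n : ℕ) (k : ℤ) :
    ramanujanShorQ (n + 2) k =
      if 0 ≤ k ∧ k ≤ (n : ℤ) + 1 then
        (X + C ((n : ℚ) + 1)) * ramanujanShorQ (n + 1) k
          + C (((n : ℤ) + k : ℤ) : ℚ) * ramanujanShorQ (n + 1) (k - 1)
      else 0 := rfl

theorem ramanujanShorQ_of_neg : ∀ (n : ℕ) {k : ℤ}, k < 0 → ramanujanShorQ n k = 0
  | 0, _, _ => rfl
  | 1, _, hk => by rw [ramanujanShorQ_one, if_neg hk.ne]
  | n + 2, _, hk => by rw [ramanujanShorQ_add_two, if_neg (by omega)]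

theorem ramanujanShorQ_of_le : ∀ (n : ℕ) {k : ℤ}, n ≤ k → ramanujanShorQ n k = 0
  | 0, _, _ => rfl
  | 1, _, hk => by rw [ramanujanShorQ_one, if_neg (by omega)]
  | n + 2, _, hk => by rw [ramanujanShorQ_add_two, if_neg (by push_cast at hk; omega)]

theorem sum_ramanujanShorQ_add_two {A : Type*} [CommRing A] [Algebra ℚ A] (t y : A) (m : ℕ) :
    ∑ k ∈ range (m + 2), aeval t (ramanujanShorQ (m + 2) k) * y ^ k =
      ∑ k ∈ range (m + 1), aeval t (ramanujanShorQ (m + 1) k) *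
        ((t + (m + 1)) * y ^ k + (m + 1 + k) * y ^ (k + 1)) := by
  have hrec : ∀ k ∈ range (m + 2), aeval t (ramanujanShorQ (m + 2) k) * y ^ k =
      (t + (m + 1)) * (aeval t (ramanujanShorQ (m + 1) k) * y ^ k) +
        (m + k) * (aeval t (ramanujanShorQ (m + 1) (k - 1)) * y ^ k) := by
    intro k hk
    rw [mem_range] at hk
    rw [ramanujanShorQ_add_two, if_pos (by omega)]
    simp only [map_add, map_mul, aeval_X, aeval_C, map_intCast]
    push_cast
    ring
  have hdrop_last : ∑ k ∈ range (m + 2), (t + (m + 1)) * (aeval t (ramanujanShorQ (m + 1) k) * y ^ k) =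
      ∑ k ∈ range (m + 1), (t + (m + 1)) * (aeval t (ramanujanShorQ (m + 1) k) * y ^ k) := by
    rw [sum_range_succ, ramanujanShorQ_of_le _ le_rfl]
    simp
  have hshift : ∑ k ∈ range (m + 2), (m + k) * (aeval t (ramanujanShorQ (m + 1) (k - 1)) * y ^ k) =
      ∑ k ∈ range (m + 1), (m + 1 + k) * (aeval t (ramanujanShorQ (m + 1) k) * y ^ (k + 1)) := by
    rw [sum_range_succ', ramanujanShorQ_of_neg _ (by norm_num)]
    simp only [map_zero, zero_mul, mul_zero, add_zero, Nat.cast_add, Nat.cast_one,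
      add_sub_cancel_right]
    exact sum_congr rfl fun k _ => by ring
  rw [sum_congr rfl hrec, sum_add_distrib, hdrop_last, hshift, ← sum_add_distrib]
  exact sum_congr rfl fun k _ => by ring

section Derivation

/- The `ℚ`-module structure in the type of `D` in `dn_axry` is not definitionally the one coming
from `Algebra ℚ K`, so the lemmas below keep `[Module R A]` separate from `[Algebra R A]`. -/
set_option linter.overlappingInstances false

section

variable {R A : Type*} [CommSemiring R] [CommRing A] [Algebra R A] [Module R A]
  (D : Derivation R A A)

theorem Derivation.map_aeval_eq_zero {t : A} (ht : D t = 0) (p : R[X]) : D (aeval t p) = 0 := by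
  rw [D.map_aeval, ht, smul_zero]

theorem Derivation.map_pow_of_map_eq_mul {u c : A} (h : D u = u * c) (j : ℕ) :
    D (u ^ j) = j * u ^ j * c := by
  induction j with
  | zero => simp
  | succ j ih =>
    rw [pow_succ, D.leibniz, smul_eq_mul, smul_eq_mul, ih, h]
    push_cast
    ring

variable {a x y w : A}

theorem Derivation.map_monomial_grammarH (hDa : D a = a * x * y) (hDx : D x = x * y * w)
    (hDy : D y = y ^ 3 * w) (hDw : D w = y * w ^ 2) (r m j : ℕ) :
    D (a * x ^ r * y ^ m * w ^ j) =
      a * x ^ r * y ^ m * w ^ j * (x * y + y * w * (r + m * y + j)) := by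
  simp only [D.leibniz, smul_eq_mul, hDa,
    D.map_pow_of_map_eq_mul (c := y * w) (by rw [hDx]; ring),
    D.map_pow_of_map_eq_mul (c := y ^ 2 * w) (by rw [hDy]; ring),
    D.map_pow_of_map_eq_mul (c := y * w) (by rw [hDw]; ring)]
  ring

end

section Field

variable {R K : Type*} [CommRing R] [Field K] [Algebra R K] [Module R K]
  (D : Derivation R K K) {a x y w : K}

theorem Derivation.map_shift_eq_zero (hDx : D x = x * y * w) (hDw : D w = y * w ^ 2) (r : ℕ) :
    D (r + x * w⁻¹ - 1) = 0 := by
  rcases eq_or_ne w 0 with rfl | hw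
  · simp
  · simp only [map_sub, map_add, D.map_natCast, D.map_one_eq_zero, D.leibniz, D.leibniz_inv,
      smul_eq_mul, hDx, hDw]
    field_simp
    ring

theorem Derivation.map_grammarH_mul_sum (hDa : D a = a * x * y) (hDx : D x = x * y * w)
    (hDy : D y = y ^ 3 * w) (hDw : D w = y * w ^ 2) (hw : w ≠ 0) (r m N : ℕ) {c : ℕ → K}
    (hc : ∀ k, D (c k) = 0) :
    D (a * x ^ r * y ^ (m + 1) * w ^ m * ∑ k ∈ range N, c k * y ^ k) =
      a * x ^ r * y ^ (m + 2) * w ^ (m + 1) * ∑ k ∈ range N,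
        c k * ((r + x * w⁻¹ - 1 + (m + 1)) * y ^ k + (m + 1 + k) * y ^ (k + 1)) := by
  simp only [mul_sum, map_sum]
  refine sum_congr rfl fun k _ => ?_
  rw [show a * x ^ r * y ^ (m + 1) * w ^ m * (c k * y ^ k) =
      c k * (a * x ^ r * y ^ (m + 1 + k) * w ^ m) by ring,
    D.leibniz, hc, D.map_monomial_grammarH hDa hDx hDy hDw, smul_eq_mul, smul_zero, add_zero]
  field_simp
  push_cast
  ring

end Field

end Derivation

theorem dn_axry (D : Derivation ℚ (FractionRing (MvPolynomial (Fin 4) ℚ))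
      (FractionRing (MvPolynomial (Fin 4) ℚ)))
    (hDa : D (gv 0) = gv 0 * gv 1 * gv 2)
    (hDx : D (gv 1) = gv 1 * gv 2 * gv 3)
    (hDy : D (gv 2) = (gv 2) ^ 3 * gv 3)
    (hDw : D (gv 3) = gv 2 * (gv 3) ^ 2)
    (n r : ℕ) (hn : 1 ≤ n) :
    (⇑D)^[n - 1] (gv 0 * (gv 1) ^ r * gv 2)
      = gv 0 * (gv 1) ^ r * (gv 2) ^ n * (gv 3) ^ (n - 1)
        * ∑ k ∈ Finset.range n,
            Polynomial.aeval ((r : _) + gv 1 * (gv 3)⁻¹ - 1) (ramanujanShorQ n (k : ℤ))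
              * (gv 2) ^ k := by
  have hw : gv 3 ≠ 0 :=
    (map_ne_zero_iff _ (IsFractionRing.injective _ _)).mpr (MvPolynomial.X_ne_zero 3)
  have hc : ∀ (m : ℕ) (k : ℕ),
      D (aeval ((r : _) + gv 1 * (gv 3)⁻¹ - 1) (ramanujanShorQ m k)) = 0 :=
    fun _ _ => D.map_aeval_eq_zero (D.map_shift_eq_zero hDx hDw r) _
  obtain ⟨m, rfl⟩ : ∃ m, n = m + 1 := ⟨n - 1, by omega⟩
  clear hn
  rw [Nat.add_sub_cancel]
  induction m with
  | zero => simp [ramanujanShorQ_one]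
  | succ m ih =>
    rw [Function.iterate_succ_apply', ih,
      D.map_grammarH_mul_sum hDa hDx hDy hDw hw r m _ (hc (m + 1)), ← sum_ramanujanShorQ_add_two]
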